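/- Let R be a commutative ring and let E and F be ℤ-indexed cochain complexes of R-modules that are homotopy equivalent, i.e., there are chain maps f : E → F and g : F → E together with degree −1 maps H_E : Eⁿ → Eⁿ⁻¹ and H_F : Fⁿ → Fⁿ⁻¹ satisfying id_E − g ∘ f = d_E ∘ H_E + H_E ∘ d_E and id_F − f ∘ g = d_F ∘ H_F + H_F ∘ d_F. Then there exist a cochain complex C of R-modules and chain maps i_E : E → C, p_E : C → E, i_F : F → C, p_F : C → F such that p_E ∘ i_E = id_E, p_F ∘ i_F = id_F, p_F ∘ i_E = f, and such that i_E ∘ p_E is chain homotopic to id_C and i_F ∘ p_F is chain homotopic to id_C. -/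

import Mathlib

/-
The common complex is the mapping cylinder of `f`, with `Cⁿ = Eⁿ × Eⁿ⁺¹ × Fⁿ` and
`d (a, b, c) = (d a - b, -d b, f b + d c)`. `E` and `F` sit in it as the first and last factor,
and `(a, b, c) ↦ f a + c` retracts it onto `F` up to the homotopy `(a, b, c) ↦ (0, -a, 0)`.
The homotopy `H_E` corrects `(a, b, c) ↦ a + g c` to the chain map `(a, b, c) ↦ a - H_E b + g c`
onto `E`, and `x ↦ (-H_E a, g (p_F x) - a, H_F (p_F x))` is a homotopy from `id` to `i_E ∘ p_E`:
the three components of the homotopy identity are the relation for `H_E` at `a`, the chain map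
property of `g`, and the relation for `H_F` at `p_F x`.
-/

universe u v

/-- A ℤ-indexed cochain complex of `R`-modules: a family of `R`-modules `X n`
with differentials `d n : X n →ₗ[R] X (n+1)` squaring to zero. -/
structure CochainCx (R : Type u) [CommRing R] where
  X : ℤ → Type v
  [acg : ∀ n : ℤ, AddCommGroup (X n)]
  [mod : ∀ n : ℤ, Module R (X n)]
  d : ∀ n : ℤ, X n →ₗ[R] X (n + 1)
  d_sq : ∀ (n : ℤ) (x : X n), d (n + 1) (d n x) = 0

attribute [instance] CochainCx.acg CochainCx.mod

variable {R : Type u} [CommRing R]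

/-- A chain map between cochain complexes of `R`-modules. -/
structure ChainMap (E F : CochainCx.{u, v} R) where
  f : ∀ n : ℤ, E.X n →ₗ[R] F.X n
  comm : ∀ (n : ℤ) (x : E.X n), f (n + 1) (E.d n x) = F.d n (f n x)

namespace ChainMap

variable {E F : CochainCx.{u, v} R} (f : ChainMap E F)

-- Reducible, so that `simp` sees each `f.cylinder.X n` as a product.
abbrev cylinder : CochainCx.{u, v} R where
  X n := E.X n × E.X (n + 1) × F.X n
  d n :=
    { toFun x := (E.d n x.1 - x.2.1, -E.d (n + 1) x.2.1, f.f (n + 1) x.2.1 + F.d n x.2.2)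
      map_add' _ _ := by simp only [Prod.fst_add, Prod.snd_add, map_add, Prod.mk_add_mk]; abel_nf
      map_smul' _ _ := by simp [smul_sub, smul_add] }
  d_sq n x := by simp [E.d_sq, F.d_sq, f.comm, Prod.ext_iff]

def cylinderInl : ChainMap E f.cylinder where
  f n :=
    { toFun e := ((e, 0, 0) : f.cylinder.X n)
      map_add' _ _ := by simp
      map_smul' _ _ := by simp }
  comm n x := by simp

def cylinderInr : ChainMap F f.cylinder where
  f n :=
    { toFun y := ((0, 0, y) : f.cylinder.X n)
      map_add' _ _ := by simp
      map_smul' _ _ := by simp }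
  comm n x := by simp

def cylinderProj : ChainMap f.cylinder F where
  f n :=
    { toFun x := f.f n x.1 + x.2.2
      map_add' _ _ := by simp only [Prod.fst_add, Prod.snd_add, map_add]; abel
      map_smul' _ _ := by simp }
  comm n x := by
    simp only [LinearMap.coe_mk, AddHom.coe_mk, map_add, map_sub, f.comm]
    abel

theorem cylinderProj_cylinderInl (n : ℤ) (e : E.X n) :
    f.cylinderProj.f n (f.cylinderInl.f n e) = f.f n e := by simp [cylinderProj, cylinderInl]

theorem cylinderProj_cylinderInr (n : ℤ) (y : F.X n) :
    f.cylinderProj.f n (f.cylinderInr.f n y) = y := by simp [cylinderProj, cylinderInr]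

def cylinderHomotopyInrProj (n : ℤ) : f.cylinder.X (n + 1) →ₗ[R] f.cylinder.X n where
  toFun x := ((0, -x.1, 0) : f.cylinder.X n)
  map_add' _ _ := by simp [add_comm]
  map_smul' _ _ := by simp

theorem sub_cylinderInr_cylinderProj (n : ℤ) (x : f.cylinder.X (n + 1)) :
    x - f.cylinderInr.f (n + 1) (f.cylinderProj.f (n + 1) x) =
      f.cylinder.d n (f.cylinderHomotopyInrProj n x) +
        f.cylinderHomotopyInrProj (n + 1) (f.cylinder.d (n + 1) x) := by
  simp [cylinderHomotopyInrProj, cylinderProj, cylinderInr, Prod.ext_iff]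

section Retract

variable (g : ChainMap F E) (HE : ∀ n : ℤ, E.X (n + 1) →ₗ[R] E.X n)
  (hE : ∀ (n : ℤ) (x : E.X (n + 1)),
    x - g.f (n + 1) (f.f (n + 1) x) = E.d n (HE n x) + HE (n + 1) (E.d (n + 1) x))

include hE in
def cylinderRetract : ChainMap f.cylinder E where
  f n :=
    { toFun x := x.1 - HE n x.2.1 + g.f n x.2.2
      map_add' _ _ := by simp only [Prod.fst_add, Prod.snd_add, map_add]; abel
      map_smul' _ _ := by simp [smul_sub] }
  comm n x := by
    simp only [LinearMap.coe_mk, AddHom.coe_mk, map_neg, sub_neg_eq_add, map_add, g.comm, map_sub]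
    linear_combination (norm := module) -hE n x.2.1

theorem cylinderRetract_cylinderInl (n : ℤ) (e : E.X n) :
    (f.cylinderRetract g HE hE).f n (f.cylinderInl.f n e) = e := by
  simp [cylinderRetract, cylinderInl]

variable (HF : ∀ n : ℤ, F.X (n + 1) →ₗ[R] F.X n)

def cylinderHomotopyInlRetract (n : ℤ) : f.cylinder.X (n + 1) →ₗ[R] f.cylinder.X n where
  toFun x :=
    ((-HE n x.1, g.f (n + 1) (f.f (n + 1) x.1 + x.2.2) - x.1, HF n (f.f (n + 1) x.1 + x.2.2)) :
      f.cylinder.X n)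
  map_add' _ _ := by simp only [Prod.fst_add, Prod.snd_add, map_add, Prod.mk_add_mk]; abel_nf
  map_smul' _ _ := by simp [smul_sub]

theorem sub_cylinderInl_cylinderRetract
    (hF : ∀ (n : ℤ) (y : F.X (n + 1)),
      y - f.f (n + 1) (g.f (n + 1) y) = F.d n (HF n y) + HF (n + 1) (F.d (n + 1) y))
    (n : ℤ) (x : f.cylinder.X (n + 1)) :
    x - f.cylinderInl.f (n + 1) ((f.cylinderRetract g HE hE).f (n + 1) x) =
      f.cylinder.d n (f.cylinderHomotopyInlRetract g HE HF n x) +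
        f.cylinderHomotopyInlRetract g HE HF (n + 1) (f.cylinder.d (n + 1) x) := by
  obtain ⟨a, b, c⟩ := x
  have hFp := hF n (f.f (n + 1) a + c)
  simp only [map_add] at hFp
  simp only [cylinderInl, cylinderRetract, cylinderHomotopyInlRetract, LinearMap.coe_mk,
    AddHom.coe_mk, Prod.mk_sub_mk, Prod.mk_add_mk, sub_zero, map_add, map_neg, map_sub, neg_sub,
    f.comm, g.comm, Prod.ext_iff]
  refine ⟨?_, ?_, ?_⟩
  · linear_combination (norm := module) -hE n a
  · abel
  · linear_combination (norm := module) hFp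

end Retract

end ChainMap

/-- If `E` and `F` are homotopy equivalent cochain complexes of `R`-modules (via chain
maps `f`, `g` and homotopies `H_E`, `H_F` with `id_E − g∘f = d_E∘H_E + H_E∘d_E` and
`id_F − f∘g = d_F∘H_F + H_F∘d_F`), then there exist a cochain complex `C` and chain
maps `i_E : E → C`, `p_E : C → E`, `i_F : F → C`, `p_F : C → F` with
`p_E ∘ i_E = id_E`, `p_F ∘ i_F = id_F`, `p_F ∘ i_E = f`, and such that
`i_E ∘ p_E` and `i_F ∘ p_F` are chain homotopic to `id_C`. -/
theorem homotopy_equivalence_factors_through_common_complex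
    (E F : CochainCx.{u, v} R) (f : ChainMap E F) (g : ChainMap F E)
    (HE : ∀ n : ℤ, E.X (n + 1) →ₗ[R] E.X n)
    (HF : ∀ n : ℤ, F.X (n + 1) →ₗ[R] F.X n)
    (hE : ∀ (n : ℤ) (x : E.X (n + 1)),
      x - g.f (n + 1) (f.f (n + 1) x) = E.d n (HE n x) + HE (n + 1) (E.d (n + 1) x))
    (hF : ∀ (n : ℤ) (y : F.X (n + 1)),
      y - f.f (n + 1) (g.f (n + 1) y) = F.d n (HF n y) + HF (n + 1) (F.d (n + 1) y)) :
    ∃ (C : CochainCx.{u, v} R) (iE : ChainMap E C) (pE : ChainMap C E)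
      (iF : ChainMap F C) (pF : ChainMap C F),
      (∀ (n : ℤ) (e : E.X n), pE.f n (iE.f n e) = e) ∧
      (∀ (n : ℤ) (y : F.X n), pF.f n (iF.f n y) = y) ∧
      (∀ (n : ℤ) (e : E.X n), pF.f n (iE.f n e) = f.f n e) ∧
      (∃ H₁ : ∀ n : ℤ, C.X (n + 1) →ₗ[R] C.X n,
        ∀ (n : ℤ) (x : C.X (n + 1)),
          x - iE.f (n + 1) (pE.f (n + 1) x) = C.d n (H₁ n x) + H₁ (n + 1) (C.d (n + 1) x)) ∧
      (∃ H₂ : ∀ n : ℤ, C.X (n + 1) →ₗ[R] C.X n,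
        ∀ (n : ℤ) (x : C.X (n + 1)),
          x - iF.f (n + 1) (pF.f (n + 1) x) = C.d n (H₂ n x) + H₂ (n + 1) (C.d (n + 1) x)) :=
  ⟨f.cylinder, f.cylinderInl, f.cylinderRetract g HE hE, f.cylinderInr, f.cylinderProj,
    f.cylinderRetract_cylinderInl g HE hE, f.cylinderProj_cylinderInr,
    f.cylinderProj_cylinderInl,
    ⟨f.cylinderHomotopyInlRetract g HE HF, f.sub_cylinderInl_cylinderRetract g HE hE HF hF⟩,
    ⟨f.cylinderHomotopyInrProj, f.sub_cylinderInr_cylinderProj⟩⟩
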